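/- Let (s_n)_{n≥0} be a sequence of real numbers and let n₀ ≥ 0 be an integer. Assume that the Hankel determinants satisfy D_n > 0 for all n < n₀ and D_n = 0 for all n ≥ n₀. Then there exist real numbers x_1 < x_2 < … < x_{n₀} and positive reals m_1, …, m_{n₀} such that s_k = Σ_{j=1}^{n₀} m_j x_j^k for every k ≥ 0; that is, (s_n) is the moment sequence of a positive measure concentrated in exactly n₀ points of the real line. -/

import Mathlib

/-!
The Hankel matrix `H = (s (i + j))` of size `n₀` is positive definite by Sylvester's criterion, so
the first `n₀` equations of a linear recurrence `s (t + n₀) = ∑ cᵢ s (t + i)` can be solved for `c`.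
Once the recurrence holds below `n₀ + m`, row operations turn the Hankel matrix of size
`n₀ + m + 1` into a block triangular matrix with blocks `H` and an anti-triangular Hankel matrix whose
antidiagonal entry is the defect of the recurrence at `n₀ + m`; as that determinant vanishes, so does
the defect. Hence `s` solves the recurrence, and its companion matrix `C` satisfies
`H * C ^ k = (s (i + j + k))`. Since `H * C` is symmetric, `C` is self-adjoint for the inner product
given by `H`, and diagonalising it yields `s k = ∑ wᵢ xᵢ ^ k` with `wᵢ ≥ 0`. Finally, the quadratic
form of `H` is `∑ wᵢ p(xᵢ)²` for polynomials `p` of degree `< n₀`, so positive definiteness forces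
the `n₀` points `xᵢ` to be distinct and all weights to be nonzero.
-/

open Matrix Finset Polynomial

def hankel {α : Type*} (s : ℕ → α) (n : ℕ) : Matrix (Fin n) (Fin n) α := of fun i j => s (i + j)

@[simp]
lemma hankel_apply {α : Type*} (s : ℕ → α) {n : ℕ} (i j : Fin n) : hankel s n i j = s (i + j) :=
  rfl

lemma isHermitian_hankel {α : Type*} [Star α] [TrivialStar α] (s : ℕ → α) (n : ℕ) :
    (hankel s n).IsHermitian := by
  ext i j; simp [add_comm]

lemma sign_revPerm_mul_det_hankel {R : Type*} [CommRing R] (a : ℕ → R) (m : ℕ)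
    (ha : ∀ t < m, a t = 0) :
    Equiv.Perm.sign (Fin.revPerm : Equiv.Perm (Fin (m + 1))) * (hankel a (m + 1)).det =
      a m ^ (m + 1) := by
  rw [← det_permute', det_of_isLowerTriangular]
  · have hdiag : ∀ i : Fin (m + 1), (i : ℕ) + (m - i) = m := fun i => by omega
    simp [Fin.val_rev, hdiag]
  · intro i j (hij : (i : ℕ) < j)
    simp only [submatrix_apply, id_eq, Fin.revPerm_apply, hankel_apply, Fin.val_rev]
    exact ha _ (by omega)

lemma posDef_of_forall_det_submatrix_castLE_pos {n : ℕ} {A : Matrix (Fin n) (Fin n) ℝ}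
    (hA : A.IsHermitian)
    (hdet : ∀ k (hk : k ≤ n), 0 < (A.submatrix (Fin.castLE hk) (Fin.castLE hk)).det) :
    A.PosDef := by
  induction n with
  | zero => exact ⟨hA, fun x hx => absurd (Subsingleton.elim x 0) hx⟩
  | succ n ih =>
    set e : Fin n ⊕ Fin 1 ≃ Fin (n + 1) := finSumFinEquiv
    set A' := A.submatrix e e
    have hA' : A'.IsHermitian := hA.submatrix e
    have h₁₁ : A'.toBlocks₁₁.PosDef := by
      refine ih (congrArg toBlocks₁₁ hA') fun k hk => ?_
      convert hdet k (hk.trans n.le_succ) using 2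
      ext i j; rfl
    have h₂₁ : A'.toBlocks₁₂ᴴ = A'.toBlocks₂₁ := congrArg toBlocks₂₁ hA'
    let _ := h₁₁.isUnit.invertible
    have hblocks : A' = fromBlocks A'.toBlocks₁₁ A'.toBlocks₁₂ A'.toBlocks₁₂ᴴ A'.toBlocks₂₂ := by
      rw [h₂₁, fromBlocks_toBlocks]
    set S := A'.toBlocks₂₂ - A'.toBlocks₁₂ᴴ * A'.toBlocks₁₁⁻¹ * A'.toBlocks₁₂
    have hdetA : 0 < A.det := by simpa using hdet (n + 1) le_rfl
    have hS : 0 < S.det := by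
      have h := det_fromBlocks₁₁ A'.toBlocks₁₁ A'.toBlocks₁₂ A'.toBlocks₁₂ᴴ A'.toBlocks₂₂
      rw [← hblocks, det_submatrix_equiv_self, invOf_eq_nonsing_inv] at h
      rw [h] at hdetA
      exact pos_of_mul_pos_right hdetA h₁₁.det_pos.le
    have hS' : S.PosSemidef := by
      have : S = diagonal fun _ => S.det := by
        ext i j; fin_cases i; fin_cases j; simp
      rw [this]
      exact PosSemidef.diagonal fun _ => hS.le
    have hA'psd : A'.PosSemidef := hblocks ▸ (h₁₁.fromBlocks₁₁ _ _).mpr hS'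
    exact ((posSemidef_submatrix_equiv e).mp hA'psd).posDef_iff_det_ne_zero.mpr hdetA.ne'

namespace LinearRecurrence

section CommRing

variable {R : Type*} [CommRing R] (E : LinearRecurrence R)

def defect (s : ℕ → R) (t : ℕ) : R := s (t + E.order) - ∑ i, E.coeffs i * s (t + i)

lemma isSolution_iff_forall_defect_eq_zero {s : ℕ → R} :
    E.IsSolution s ↔ ∀ t, E.defect s t = 0 := by
  simp only [IsSolution, defect, sub_eq_zero]

/-- Left multiplication by this matrix subtracts from row `E.order + r` of a square matrix of size
`E.order + m` the rows `r, …, r + E.order - 1` weighted by the coefficients of the recurrence. -/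
def eliminationMatrix (m : ℕ) : Matrix (Fin (E.order + m)) (Fin (E.order + m)) R :=
  of <| Fin.addCases (fun a => Pi.single (Fin.castAdd m a) 1)
    (fun r => Pi.single (Fin.natAdd E.order r) 1 -
      ∑ i, E.coeffs i • Pi.single ⟨r + i, by omega⟩ 1)

lemma eliminationMatrix_castAdd {m : ℕ} (a : Fin E.order) :
    E.eliminationMatrix m (Fin.castAdd m a) = Pi.single (Fin.castAdd m a) 1 := by
  ext; simp [eliminationMatrix]

lemma eliminationMatrix_natAdd {m : ℕ} (r : Fin m) :
    E.eliminationMatrix m (Fin.natAdd E.order r) = Pi.single (Fin.natAdd E.order r) 1 -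
      ∑ i, E.coeffs i • Pi.single ⟨r + i, by omega⟩ 1 := by
  ext; simp [eliminationMatrix]

lemma eliminationMatrix_natAdd_apply {m : ℕ} (r : Fin m) (y : Fin (E.order + m)) :
    E.eliminationMatrix m (Fin.natAdd E.order r) y =
      (if (y : ℕ) = E.order + r then 1 else 0) -
        ∑ i : Fin E.order, if (y : ℕ) = r + i then E.coeffs i else 0 := by
  simp [eliminationMatrix_natAdd, Pi.single_apply, Fin.ext_iff]

lemma det_eliminationMatrix (m : ℕ) : (E.eliminationMatrix m).det = 1 := by
  rw [det_of_isLowerTriangular]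
  · refine prod_eq_one fun x _ => ?_
    induction x using Fin.addCases with
    | left a => simp [eliminationMatrix_castAdd]
    | right r =>
      rw [eliminationMatrix_natAdd_apply, Fin.val_natAdd, if_pos rfl,
        sum_eq_zero fun i _ => if_neg (by omega), sub_zero]
  · intro x y (hxy : x < y)
    induction x using Fin.addCases with
    | left a => simp [eliminationMatrix_castAdd, hxy.ne']
    | right r =>
      have hy : E.order + (r : ℕ) < y := hxy
      rw [eliminationMatrix_natAdd_apply, if_neg (by omega),
        sum_eq_zero fun i _ => if_neg (by omega), sub_zero]

lemma eliminationMatrix_mul_hankel_castAdd (s : ℕ → R) {m : ℕ} (a : Fin E.order)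
    (j : Fin (E.order + m)) :
    (E.eliminationMatrix m * hankel s (E.order + m)) (Fin.castAdd m a) j = s (a + j) := by
  simp [mul_apply', eliminationMatrix_castAdd]

lemma eliminationMatrix_mul_hankel_natAdd (s : ℕ → R) {m : ℕ} (r : Fin m)
    (j : Fin (E.order + m)) :
    (E.eliminationMatrix m * hankel s (E.order + m)) (Fin.natAdd E.order r) j =
      E.defect s (r + j) := by
  simp only [mul_apply', eliminationMatrix_natAdd, sub_dotProduct, sum_dotProduct,
    smul_dotProduct, single_dotProduct, hankel_apply, Fin.val_natAdd, one_mul, smul_eq_mul, defect]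
  congr 1
  · ring_nf
  · exact sum_congr rfl fun i _ => by ring_nf

lemma det_hankel_add_succ (s : ℕ → R) (m : ℕ) (hs : ∀ t < E.order + m, E.defect s t = 0) :
    (hankel s (E.order + (m + 1))).det =
      (hankel s E.order).det * (hankel (fun t => E.defect s (t + E.order)) (m + 1)).det := by
  set M := E.eliminationMatrix (m + 1) * hankel s (E.order + (m + 1))
  have hM : M.det = (hankel s (E.order + (m + 1))).det := by
    rw [det_mul, det_eliminationMatrix, one_mul]
  rw [← hM, ← det_submatrix_equiv_self finSumFinEquiv M, ← fromBlocks_toBlocks (M.submatrix _ _)]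
  have h₂₁ : (M.submatrix finSumFinEquiv finSumFinEquiv).toBlocks₂₁ = 0 := by
    ext r a
    simp only [toBlocks₂₁, of_apply, submatrix_apply, finSumFinEquiv_apply_left,
      finSumFinEquiv_apply_right, M, eliminationMatrix_mul_hankel_natAdd, Matrix.zero_apply]
    exact hs _ (by simp only [Fin.val_castAdd]; omega)
  rw [h₂₁, det_fromBlocks_zero₂₁]
  congr 2
  · ext a b; simp [toBlocks₁₁, M, eliminationMatrix_mul_hankel_castAdd]
  · ext r q
    simp only [toBlocks₂₂, of_apply, submatrix_apply, finSumFinEquiv_apply_right, M,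
      eliminationMatrix_mul_hankel_natAdd, Fin.val_natAdd, hankel_apply]
    ring_nf

lemma isSolution_of_det_hankel_eq_zero [IsDomain R] {s : ℕ → R}
    (hD : (hankel s E.order).det ≠ 0) (hzero : ∀ k > E.order, (hankel s k).det = 0)
    (hinit : ∀ t < E.order, E.defect s t = 0) : E.IsSolution s := by
  rw [isSolution_iff_forall_defect_eq_zero]
  intro t
  induction t using Nat.strong_induction_on with
  | _ t ih =>
    obtain ht | ⟨m, rfl⟩ : t < E.order ∨ ∃ m, t = E.order + m :=
      (lt_or_ge t E.order).imp_right Nat.exists_eq_add_of_le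
    · exact hinit t ht
    have hQ : (hankel (fun t => E.defect s (t + E.order)) (m + 1)).det = 0 := by
      have h := E.det_hankel_add_succ s m ih
      rw [hzero _ (by omega)] at h
      exact (mul_eq_zero.mp h.symm).resolve_left hD
    have h := sign_revPerm_mul_det_hankel (fun t => E.defect s (t + E.order)) m
      fun t ht => ih _ (by omega)
    rw [hQ, mul_zero, eq_comm, pow_eq_zero_iff m.succ_ne_zero] at h
    rwa [add_comm]

def companion : Matrix (Fin E.order) (Fin E.order) R :=
  of fun i j => if (j : ℕ) + 1 = E.order then E.coeffs i else if (i : ℕ) = j + 1 then 1 else 0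

lemma hankel_mul_companion {s : ℕ → R} (hs : E.IsSolution s) :
    hankel s E.order * E.companion = hankel (fun t => s (t + 1)) E.order := by
  ext i j
  simp only [mul_apply, hankel_apply, companion, of_apply]
  split_ifs with hj
  · rw [show (i : ℕ) + j + 1 = i + E.order by omega, hs]
    exact sum_congr rfl fun _ _ => mul_comm _ _
  · rw [Fintype.sum_eq_single ⟨j + 1, by omega⟩ fun p hp => by
      rw [if_neg fun h => hp (Fin.ext h), mul_zero]]
    simp [add_assoc]

lemma hankel_mul_companion_pow {s : ℕ → R} (hs : E.IsSolution s) (k : ℕ) :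
    hankel s E.order * E.companion ^ k = hankel (fun t => s (t + k)) E.order := by
  induction k with
  | zero => simp
  | succ k ih =>
    have hk : E.IsSolution fun t => s (t + k) := fun t => by
      simpa only [add_right_comm] using hs (t + k)
    rw [pow_succ, ← mul_assoc, ih, E.hankel_mul_companion hk]
    simp only [add_right_comm, add_assoc]

end CommRing

lemma exists_isSolution_of_det_hankel {K : Type*} [Field K] {s : ℕ → K} {n : ℕ}
    (hD : (hankel s n).det ≠ 0) (hzero : ∀ k > n, (hankel s k).det = 0) :
    ∃ E : LinearRecurrence K, E.order = n ∧ E.IsSolution s := by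
  set E : LinearRecurrence K := ⟨n, (hankel s n)⁻¹ *ᵥ fun i => s (i + n)⟩
  refine ⟨E, rfl, E.isSolution_of_det_hankel_eq_zero hD hzero fun t ht => ?_⟩
  have hc : hankel s n *ᵥ E.coeffs = fun i : Fin n => s (i + n) := by
    rw [mulVec_mulVec, mul_nonsing_inv _ (isUnit_iff_ne_zero.mpr hD), one_mulVec]
  have h := congrFun hc (⟨t, ht⟩ : Fin n)
  simp only [mulVec, dotProduct, hankel_apply] at h
  rw [defect, sub_eq_zero, ← h]
  exact sum_congr rfl fun i _ => mul_comm _ _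

end LinearRecurrence

/-- Writing `H = Rᴴ * R`, the matrix `C` becomes the symmetric matrix `R * C * R⁻¹`, and the
spectral theorem applies to it. -/
lemma exists_mul_pow_eq_conjTranspose_mul_diagonal_pow_mul {n : Type*} [Fintype n]
    [DecidableEq n] {H C : Matrix n n ℝ} (hH : H.PosDef) (hHC : (H * C).IsHermitian) :
    ∃ (P : Matrix n n ℝ) (d : n → ℝ), ∀ k : ℕ, H * C ^ k = Pᴴ * diagonal (d ^ k) * P := by
  obtain ⟨R, hR, rfl⟩ : ∃ R, IsUnit R ∧ H = Rᴴ * R := by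
    open scoped MatrixOrder in
    exact CStarAlgebra.isStrictlyPositive_iff_eq_star_mul_self.mp hH.isStrictlyPositive
  set A := (R⁻¹)ᴴ * (Rᴴ * R * C) * R⁻¹
  have hA : A.IsHermitian := isHermitian_conjTranspose_mul_mul _ hHC
  have hRA : SemiconjBy R C A := by
    have hR' := (isUnit_iff_isUnit_det R).mp hR
    have : (R⁻¹)ᴴ * Rᴴ = 1 := by
      rw [← conjTranspose_mul, mul_nonsing_inv _ hR', conjTranspose_one]
    simp only [SemiconjBy, A, mul_assoc, nonsing_inv_mul _ hR', mul_one]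
    simp only [← mul_assoc, this, one_mul]
  set U := (hA.eigenvectorUnitary : Matrix n n ℝ)
  refine ⟨star U * R, hA.eigenvalues, fun k => ?_⟩
  have hAk : A ^ k = U * diagonal (hA.eigenvalues ^ k) * star U := by
    conv_lhs => rw [hA.spectral_theorem, ← map_pow, diagonal_pow, Unitary.conjStarAlgAut_apply]
    simp only [RCLike.ofReal_real_eq_id, Function.id_comp, U]
  calc Rᴴ * R * C ^ k = Rᴴ * (A ^ k * R) := by rw [mul_assoc, (hRA.pow_right k).eq]
    _ = (star U * R)ᴴ * diagonal (hA.eigenvalues ^ k) * (star U * R) := by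
      rw [hAk, conjTranspose_mul, star_eq_conjTranspose, conjTranspose_conjTranspose]
      simp only [mul_assoc]

lemma exists_eq_sum_mul_pow_of_isSolution {s : ℕ → ℝ} {E : LinearRecurrence ℝ}
    (hE : E.IsSolution s) (hH : (hankel s E.order).PosDef) :
    ∃ w x : Fin E.order → ℝ, (∀ i, 0 ≤ w i) ∧ ∀ k, s k = ∑ i, w i * x i ^ k := by
  rcases Nat.eq_zero_or_pos E.order with h0 | hpos
  · have : IsEmpty (Fin E.order) := by rw [h0]; infer_instance
    refine ⟨0, 0, fun _ => le_rfl, fun k => ?_⟩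
    simpa [h0] using hE k
  obtain ⟨P, d, hP⟩ := exists_mul_pow_eq_conjTranspose_mul_diagonal_pow_mul hH
    (E.hankel_mul_companion hE ▸ isHermitian_hankel _ _)
  refine ⟨fun i => P i ⟨0, hpos⟩ ^ 2, d, fun i => sq_nonneg _, fun k => ?_⟩
  have h := congrFun₂ (hP k) ⟨0, hpos⟩ ⟨0, hpos⟩
  rw [E.hankel_mul_companion_pow hE k, mul_apply] at h
  simp only [hankel_apply, zero_add, mul_diagonal, conjTranspose_apply, star_trivial,
    Pi.pow_apply] at h
  rw [h]
  exact sum_congr rfl fun i _ => by ring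

lemma dotProduct_hankel_mulVec {R ι : Type*} [CommRing R] [Fintype ι] {s : ℕ → R} (w x : ι → R)
    (hs : ∀ k, s k = ∑ i, w i * x i ^ k) {n : ℕ} (u : Fin n → R) :
    u ⬝ᵥ hankel s n *ᵥ u = ∑ i, w i * (∑ a, u a * x i ^ (a : ℕ)) ^ 2 := by
  simp only [dotProduct, mulVec, hankel_apply, hs, pow_add, mul_sum, sq, sum_mul]
  conv_rhs => rw [sum_comm]; enter [2, a]; rw [sum_comm]
  exact sum_congr rfl fun a _ => sum_congr rfl fun b _ => sum_congr rfl fun i _ => by ring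

/-- The polynomial vanishing on the support has degree `< n` and kills the quadratic form. -/
lemma le_card_image_of_posDef_hankel {ι : Type*} [Fintype ι] {s : ℕ → ℝ} (w x : ι → ℝ)
    (hs : ∀ k, s k = ∑ i, w i * x i ^ k) {n : ℕ} (hH : (hankel s n).PosDef) :
    n ≤ ((univ.filter fun i => w i ≠ 0).image x).card := by
  set S := (univ.filter fun i => w i ≠ 0).image x
  by_contra! hS
  set p : ℝ[X] := ∏ y ∈ S, (X - C y)
  have hdeg : p.natDegree = S.card := natDegree_finsetProd_X_sub_C_eq_card S id
  set u : Fin n → ℝ := fun a => p.coeff a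
  have hu : u ≠ 0 := fun h => by
    have := congrFun h ⟨S.card, hS⟩
    simp only [u, ← hdeg, Pi.zero_apply] at this
    exact one_ne_zero (((monic_prod_X_sub_C id S).coeff_natDegree).symm.trans this)
  have heval : ∀ y, ∑ a : Fin n, u a * y ^ (a : ℕ) = p.eval y := fun y => by
    rw [eval_eq_sum_range' (hdeg ▸ hS), ← Fin.sum_univ_eq_sum_range (fun a => p.coeff a * y ^ a)]
  have hroot : ∀ i, w i * p.eval (x i) ^ 2 = 0 := fun i => by
    by_cases hw : w i = 0
    · rw [hw, zero_mul]
    · have : x i ∈ S := mem_image_of_mem x (mem_filter.2 ⟨mem_univ _, hw⟩)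
      rw [eval_prod, prod_eq_zero this (by simp), sq, mul_zero, mul_zero]
  have hpos := hH.dotProduct_mulVec_pos hu
  rw [star_trivial, dotProduct_hankel_mulVec w x hs] at hpos
  simp only [heval, hroot, sum_const_zero, lt_self_iff_false] at hpos

lemma exists_strictMono_of_posDef_hankel {s : ℕ → ℝ} {n : ℕ} (w x : Fin n → ℝ)
    (hw : ∀ i, 0 ≤ w i) (hs : ∀ k, s k = ∑ i, w i * x i ^ k) (hH : (hankel s n).PosDef) :
    ∃ (y m : Fin n → ℝ), StrictMono y ∧ (∀ j, 0 < m j) ∧ ∀ k, s k = ∑ j, m j * y j ^ k := by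
  have hcard := le_card_image_of_posDef_hankel w x hs hH
  have hsupp : univ.filter (fun i => w i ≠ 0) = univ := eq_univ_of_card _ <|
    le_antisymm (card_le_univ _) (by simpa using hcard.trans card_image_le)
  have hinj : Function.Injective x := by
    rw [hsupp] at hcard
    rw [← Set.injOn_univ, ← coe_univ, ← card_image_iff]
    exact le_antisymm card_image_le (by simpa using hcard)
  have hw' : ∀ i, w i ≠ 0 := fun i => by simpa using (Finset.ext_iff.mp hsupp i).2 (mem_univ i)
  set σ := Tuple.sort x
  refine ⟨x ∘ σ, w ∘ σ, (Tuple.monotone_sort x).strictMono_of_injective (hinj.comp σ.injective),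
    fun j => (hw _).lt_of_ne' (hw' _), fun k => ?_⟩
  rw [hs, ← Equiv.sum_comp σ]
  rfl

/-- If the Hankel determinants of a real sequence satisfy `D n > 0` for `n < n₀`
and `D n = 0` for `n ≥ n₀`, then the sequence is the moment sequence of a positive
measure concentrated in exactly `n₀` points of the real line. -/
theorem moment_sequence_of_det_sign_pattern (s : ℕ → ℝ) (n₀ : ℕ)
    (hpos : ∀ n < n₀, 0 < (Matrix.of fun i j : Fin (n + 1) => s (i.1 + j.1)).det)
    (hzero : ∀ n ≥ n₀, (Matrix.of fun i j : Fin (n + 1) => s (i.1 + j.1)).det = 0) :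
    ∃ (x : Fin n₀ → ℝ) (m : Fin n₀ → ℝ), StrictMono x ∧ (∀ j, 0 < m j) ∧
      ∀ k : ℕ, s k = ∑ j, m j * x j ^ k := by
  have hH : (hankel s n₀).PosDef := by
    refine posDef_of_forall_det_submatrix_castLE_pos (isHermitian_hankel s n₀) ?_
    rintro (_ | k) hk
    · simp
    · exact hpos k hk
  obtain ⟨E, rfl, hE⟩ := LinearRecurrence.exists_isSolution_of_det_hankel hH.det_pos.ne'
    fun k hk => by
      obtain ⟨k, rfl⟩ := Nat.exists_eq_add_one_of_ne_zero (by omega : k ≠ 0)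
      exact hzero k (by omega)
  obtain ⟨w, x, hw, hs⟩ := exists_eq_sum_mul_pow_of_isSolution hE hH
  exact exists_strictMono_of_posDef_hankel w x hw hs hH
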